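/- If G_1 and G_2 are sub-cactus digraphs of a cactus digraph G, then their intersection G_1 ∩ G_2 is either a sub-cactus digraph of G, a single vertex, or empty. -/

import Mathlib

structure DirGraph (V : Type) where
  Adj : V → V → Prop
  loopless : ∀ v, ¬ Adj v v

namespace DirGraph

variable {V V' : Type}

/-- A walk is a nonempty list of vertices with consecutive arcs. -/
def IsWalk (G : DirGraph V) : List V → Prop
  | [] => False
  | [_] => True
  | a :: b :: l => G.Adj a b ∧ G.IsWalk (b :: l)

def IsWalkFromTo (G : DirGraph V) (p : List V) (x y : V) : Prop :=
  G.IsWalk p ∧ p.head? = some x ∧ p.getLast? = some y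

def StronglyConnected (G : DirGraph V) : Prop :=
  ∀ x y : V, ∃ p, G.IsWalkFromTo p x y

def IsSimplePath (G : DirGraph V) (p : List V) : Prop :=
  G.IsWalk p ∧ p.Nodup

def IsSimplePathFromTo (G : DirGraph V) (p : List V) (x y : V) : Prop :=
  G.IsSimplePath p ∧ p.head? = some x ∧ p.getLast? = some y

/-- The arcs of a walk given as a list of vertices. -/
def arcs (p : List V) : List (V × V) := p.zip p.tail

/-- The preterminal (second-to-last) vertex of a path. -/
def preterminal (p : List V) : Option V := p.dropLast.getLast?

/-- A simple cycle: a closed walk whose vertices are distinct except for the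
repeated endpoint. -/
def IsSimpleCycle (G : DirGraph V) (p : List V) : Prop :=
  G.IsWalk p ∧ 2 ≤ p.length ∧ p.head? = p.getLast? ∧ p.dropLast.Nodup

/-- Two cycles are equal as cycles when they have the same set of arcs. -/
def CycleEquiv (p q : List V) : Prop :=
  ∀ a : V × V, a ∈ arcs p ↔ a ∈ arcs q

/-- Each arc lies in exactly one simple cycle (up to arc-set equality). -/
def CactusArcCond (G : DirGraph V) : Prop :=
  ∀ x y, G.Adj x y →
    (∃ p, G.IsSimpleCycle p ∧ (x, y) ∈ arcs p) ∧
    (∀ p q, G.IsSimpleCycle p → (x, y) ∈ arcs p →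
      G.IsSimpleCycle q → (x, y) ∈ arcs q → CycleEquiv p q)

/-- A cactus digraph: strongly connected and each arc lies in exactly one
simple cycle. -/
def IsCactus (G : DirGraph V) : Prop :=
  G.StronglyConnected ∧ G.CactusArcCond

noncomputable def inDeg (G : DirGraph V) (v : V) : ℕ := Nat.card {u // G.Adj u v}
noncomputable def outDeg (G : DirGraph V) (v : V) : ℕ := Nat.card {u // G.Adj v u}

/-- A connecting point: a vertex shared by two distinct simple cycles. -/
def IsConnectingPoint (G : DirGraph V) (v : V) : Prop :=
  ∃ p q, G.IsSimpleCycle p ∧ G.IsSimpleCycle q ∧ ¬ CycleEquiv p q ∧ v ∈ p ∧ v ∈ q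

/-- An expansion of digraphs. -/
structure IsExpansion (G' : DirGraph V') (G : DirGraph V) (φ : V' → V) : Prop where
  map_adj : ∀ ⦃x y⦄, G'.Adj x y → G.Adj (φ x) (φ y)
  vert_surj : Function.Surjective φ
  arc_surj : ∀ ⦃x y⦄, G.Adj x y → ∃ x' y', G'.Adj x' y' ∧ φ x' = x ∧ φ y' = y
  lift : ∀ ⦃x y⦄, G.Adj x y → ∀ y', φ y' = y → ∃! x', G'.Adj x' y' ∧ φ x' = x

/-- A doubly bidirectionally connected pair. -/
def Dbcp (G : DirGraph V) (p q : V) : Prop :=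
  p ≠ q ∧
  (∃ P Q, G.IsSimplePathFromTo P p q ∧ G.IsSimplePathFromTo Q p q ∧
    preterminal P ≠ preterminal Q) ∧
  (∃ P Q, G.IsSimplePathFromTo P q p ∧ G.IsSimplePathFromTo Q q p ∧
    preterminal P ≠ preterminal Q)

/-- Subgraph of a digraph: a vertex subset together with a subrelation of arcs
supported on it. -/
structure Subgraph (G : DirGraph V) where
  verts : Set V
  Adj : V → V → Prop
  adj_sub : ∀ ⦃x y⦄, Adj x y → G.Adj x y
  mem_left : ∀ ⦃x y⦄, Adj x y → x ∈ verts
  mem_right : ∀ ⦃x y⦄, Adj x y → y ∈ verts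

def Subgraph.toDirGraph {G : DirGraph V} (H : Subgraph G) : DirGraph V :=
  ⟨H.Adj, fun v h => G.loopless v (H.adj_sub h)⟩

/-- A sub-cactus digraph: a nonempty subgraph that is strongly connected (on
its vertex set) and in which each arc lies in exactly one simple cycle. -/
def Subgraph.IsCactus {G : DirGraph V} (H : Subgraph G) : Prop :=
  H.verts.Nonempty ∧
  (∀ x ∈ H.verts, ∀ y ∈ H.verts, ∃ p, H.toDirGraph.IsWalkFromTo p x y) ∧
  H.toDirGraph.CactusArcCond

def Subgraph.inter {G : DirGraph V} (H K : Subgraph G) : Subgraph G where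
  verts := H.verts ∩ K.verts
  Adj x y := H.Adj x y ∧ K.Adj x y
  adj_sub := fun _ _ h => H.adj_sub h.1
  mem_left := fun _ _ h => ⟨H.mem_left h.1, K.mem_left h.2⟩
  mem_right := fun _ _ h => ⟨H.mem_right h.1, K.mem_right h.2⟩

def Subgraph.le {G : DirGraph V} (H K : Subgraph G) : Prop :=
  H.verts ⊆ K.verts ∧ ∀ ⦃x y⦄, H.Adj x y → K.Adj x y

/-- The single-vertex subgraph. -/
def singleVert (G : DirGraph V) (v : V) : Subgraph G where
  verts := {v}
  Adj _ _ := False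
  adj_sub := by intro _ _ h; exact h.elim
  mem_left := by intro _ _ h; exact h.elim
  mem_right := by intro _ _ h; exact h.elim

/-- The intersection of all sub-cactus digraphs of `G` containing `W`. -/
def CsubOf (G : DirGraph V) (W : Set V) : Subgraph G where
  verts := {x | ∀ H : Subgraph G, H.IsCactus → W ⊆ H.verts → x ∈ H.verts}
  Adj x y := G.Adj x y ∧ ∀ H : Subgraph G, H.IsCactus → W ⊆ H.verts → H.Adj x y
  adj_sub := fun _ _ h => h.1
  mem_left := fun _ _ h H hH hW => H.mem_left (h.2 H hH hW)
  mem_right := fun _ _ h H hH hW => H.mem_right (h.2 H hH hW)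

open Classical in
/-- `C G r v`: the minimum sub-cactus digraph containing `{r, v}` (and the
single vertex `{r}` when `v = r`). -/
noncomputable def C (G : DirGraph V) (r v : V) : Subgraph G :=
  if v = r then singleVert G r else CsubOf G {r, v}

/-- The preorder on vertices of the rooted cactus digraph `(G, r)`:
`v ≼ w ↔ C(v) ⊆ C(w)`. -/
def pre (G : DirGraph V) (r v w : V) : Prop :=
  Subgraph.le (C G r v) (C G r w)

end DirGraph

/-! In a cactus digraph simple paths are unique. If two simple paths from `x` to `y` left `x`
along different arcs `(x, a)` and `(x, b)`, closing each of them with the same simple path from `y`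
back to `x` would produce two simple cycles through the last arc `(w, x)` of that return path; these
cycles must coincide, yet one leaves `x` towards `a` and the other towards `b`.

Hence two vertices of `H ∩ K` are joined by the same simple path in `H` as in `K`, which therefore
lies in `H ∩ K`. And the unique cycle of `G` through an arc of `H ∩ K` lies in `H` and in `K`, each
of which contains some cycle through that arc. So a nonempty intersection is always a sub-cactus
(a single vertex without arcs is one). -/

namespace DirGraph

variable {V : Type} {G G₁ G₂ : DirGraph V} {p q l : List V} {x y z a b w : V}

lemma mem_arcs_iff :
    (a, b) ∈ arcs p ↔ ∃ l₁ l₂, p = l₁ ++ a :: b :: l₂ := by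
  induction p using List.twoStepInduction with
  | nil => simp [arcs]
  | singleton c =>
    simp only [arcs, List.tail_cons, List.zip_nil_right, List.not_mem_nil, false_iff]
    rintro ⟨_ | ⟨_, _ | ⟨_, _⟩⟩, _, h⟩ <;> simp at h
  | cons_cons c d l _ ih =>
    rw [show arcs (c :: d :: l) = (c, d) :: arcs (d :: l) from rfl, List.mem_cons, ih]
    constructor
    · rintro (h | ⟨l₁, l₂, h⟩)
      · obtain ⟨rfl, rfl⟩ := Prod.mk_inj.1 h
        exact ⟨[], l, rfl⟩
      · exact ⟨c :: l₁, l₂, by rw [h]; rfl⟩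
    · rintro ⟨_ | ⟨e, l₁⟩, l₂, h⟩
      · simp_all
      · simp only [List.cons_append, List.cons.injEq] at h
        exact Or.inr ⟨l₁, l₂, h.2⟩

lemma mem_arcs_cons (h : l.head? = some a) : (x, a) ∈ arcs (x :: l) := by
  obtain ⟨l', rfl⟩ := List.head?_eq_some_iff.1 h
  exact mem_arcs_iff.2 ⟨[], l', rfl⟩

lemma head?_eq_of_mem_arcs_cons (hx : x ∉ l.dropLast)
    (h : (x, a) ∈ arcs (x :: l)) : l.head? = some a := by
  obtain ⟨_ | ⟨c, l₁⟩, l₂, h⟩ := mem_arcs_iff.1 h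
  · simp_all
  · simp only [List.cons_append, List.cons.injEq] at h
    rw [h.2, List.dropLast_append_of_ne_nil (List.cons_ne_nil _ _)] at hx
    simp at hx

lemma isWalk_iff_isChain : ∀ {p : List V}, G.IsWalk p ↔ p ≠ [] ∧ p.IsChain G.Adj
  | [] => by simp [IsWalk]
  | [_] => by simp [IsWalk]
  | _ :: b :: l => by
    have ih : G.IsWalk (b :: l) ↔ (b :: l).IsChain G.Adj := isWalk_iff_isChain.trans (by simp)
    simp [IsWalk, ih]

lemma isWalk_iff_forall_mem_arcs :
    G.IsWalk p ↔ p ≠ [] ∧ ∀ a b, (a, b) ∈ arcs p → G.Adj a b := by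
  simp only [isWalk_iff_isChain, List.isChain_iff_forall_rel_of_append_cons_cons, mem_arcs_iff]
  grind

lemma IsWalk.mono (h : ∀ ⦃a b⦄, G₁.Adj a b → G₂.Adj a b) (hp : G₁.IsWalk p) : G₂.IsWalk p := by
  rw [isWalk_iff_isChain] at hp ⊢
  exact ⟨hp.1, hp.2.imp h⟩

lemma IsSimplePathFromTo.mono (h : ∀ ⦃a b⦄, G₁.Adj a b → G₂.Adj a b)
    (hp : G₁.IsSimplePathFromTo p x y) : G₂.IsSimplePathFromTo p x y :=
  ⟨⟨hp.1.1.mono h, hp.1.2⟩, hp.2⟩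

lemma IsSimpleCycle.mono (h : ∀ ⦃a b⦄, G₁.Adj a b → G₂.Adj a b) (hp : G₁.IsSimpleCycle p) :
    G₂.IsSimpleCycle p :=
  ⟨hp.1.mono h, hp.2⟩

lemma IsWalkFromTo.append (hp : G.IsWalkFromTo p x y) (hq : G.IsWalkFromTo q y z) :
    G.IsWalkFromTo (p ++ q.tail) x z := by
  obtain ⟨hpw, hpx, hpy⟩ := hp
  obtain ⟨hqw, hqy, hqz⟩ := hq
  obtain ⟨q, rfl⟩ := List.head?_eq_some_iff.1 hqy
  rw [isWalk_iff_isChain] at hpw hqw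
  refine ⟨isWalk_iff_isChain.2 ⟨by simp [hpw.1], List.isChain_append.2 ⟨hpw.2, hqw.2.tail, ?_⟩⟩,
    by rw [List.head?_append_of_ne_nil _ hpw.1, hpx], ?_⟩
  · intro a ha b hb
    rw [hpy, Option.mem_some_iff] at ha
    exact ha ▸ hqw.2.rel_head? hb
  · cases q <;> simp_all [List.getLast?_append]

lemma exists_isSimplePathFromTo_subset (hp : G.IsWalkFromTo p x y) :
    ∃ q, G.IsSimplePathFromTo q x y ∧ q ⊆ p := by
  induction p generalizing x with
  | nil => exact hp.1.elim
  | cons c t ih =>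
    obtain ⟨hw, hx, hy⟩ := hp
    obtain rfl : c = x := by simpa using hx
    cases t with
    | nil => exact ⟨[c], ⟨⟨trivial, List.nodup_singleton c⟩, rfl, hy⟩, List.Subset.refl _⟩
    | cons d t =>
      obtain ⟨hcd, hw⟩ := hw
      obtain ⟨q, ⟨⟨hqw, hqn⟩, hqd, hqy⟩, hqt⟩ := ih ⟨hw, rfl, hy⟩
      by_cases hcq : c ∈ q
      · obtain ⟨q₁, q₂, rfl⟩ := List.append_of_mem hcq
        refine ⟨c :: q₂, ⟨⟨?_, hqn.of_append_right⟩, rfl, ?_⟩, ?_⟩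
        · rw [isWalk_iff_isChain] at hqw ⊢
          exact ⟨List.cons_ne_nil _ _, hqw.2.right_of_append⟩
        · simpa [List.getLast?_append] using hqy
        · exact fun v hv => List.mem_cons_of_mem _ (hqt (List.mem_append_right _ hv))
      · obtain ⟨q', rfl⟩ := List.head?_eq_some_iff.1 hqd
        refine ⟨c :: d :: q', ⟨⟨⟨hcd, hqw⟩, List.nodup_cons.2 ⟨hcq, hqn⟩⟩, rfl, ?_⟩, ?_⟩
        · rwa [List.getLast?_cons_cons]
        · exact List.cons_subset_cons _ hqt

lemma IsWalkFromTo.exists_eq_concat (hp : G.IsWalkFromTo p x y) (hxy : x ≠ y) :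
    ∃ p' w, p = p' ++ [y] ∧ G.IsWalkFromTo p' x w ∧ G.Adj w y := by
  obtain ⟨hpw, hpx, hpy⟩ := hp
  obtain ⟨p', rfl⟩ := List.getLast?_eq_some_iff.1 hpy
  have hp' : p' ≠ [] := by rintro rfl; simp_all
  obtain ⟨p'', w, rfl⟩ := (p'.eq_nil_or_concat').resolve_left hp'
  rw [isWalk_iff_isChain, List.isChain_append] at hpw
  refine ⟨p'' ++ [w], w, rfl, ⟨isWalk_iff_isChain.2 ⟨hp', hpw.2.1⟩, ?_, by simp⟩,
    hpw.2.2.2 w (by simp) y rfl⟩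
  rwa [List.head?_append_of_ne_nil _ hp'] at hpx

lemma isSimpleCycle_cons (hxa : G.Adj x a)
    (hl : G.IsSimplePathFromTo l a x) : G.IsSimpleCycle (x :: l) := by
  obtain ⟨⟨hlw, hln⟩, hla, hlx⟩ := hl
  obtain ⟨l', rfl⟩ := List.head?_eq_some_iff.1 hla
  obtain ⟨t, ht⟩ := List.getLast?_eq_some_iff.1 hlx
  refine ⟨⟨hxa, hlw⟩, by simp, by rw [List.getLast?_cons_cons, hlx]; rfl, ?_⟩
  rw [List.dropLast_cons_of_ne_nil (List.cons_ne_nil _ _), ht, List.dropLast_concat]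
  rw [ht, List.nodup_append] at hln
  exact List.nodup_cons.2 ⟨fun h => hln.2.2 x h x (by simp) rfl, hln.1⟩

lemma exists_isSimpleCycle_of_isWalkFromTo (hxa : G.Adj x a) (hp : G.IsWalkFromTo p a w)
    (hwx : G.Adj w x) (hx : x ∉ p) :
    ∃ l, G.IsSimpleCycle (x :: l) ∧ l.head? = some a ∧ x ∉ l.dropLast ∧ (w, x) ∈ arcs (x :: l) := by
  obtain ⟨S, ⟨⟨hSw, hSn⟩, hSa, hSw'⟩, hSp⟩ := exists_isSimplePathFromTo_subset hp
  have hxS : x ∉ S := fun h => hx (hSp h)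
  have hS : G.IsWalkFromTo (S ++ [x]) a x :=
    IsWalkFromTo.append (q := [w, x]) ⟨hSw, hSa, hSw'⟩ ⟨⟨hwx, trivial⟩, rfl, rfl⟩
  refine ⟨S ++ [x], isSimpleCycle_cons hxa ⟨⟨hS.1, ?_⟩, hS.2⟩, hS.2.1, by rwa [List.dropLast_concat],
    ?_⟩
  · rw [List.nodup_append]
    exact ⟨hSn, List.nodup_singleton x, fun u hu v hv => by rintro rfl; simp_all⟩
  · obtain ⟨S', rfl⟩ := List.getLast?_eq_some_iff.1 hSw'
    exact mem_arcs_iff.2 ⟨x :: S', [], by simp⟩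

lemma IsCactus.eq_of_adj_of_isWalkFromTo (hG : G.IsCactus) (hxa : G.Adj x a) (hxb : G.Adj x b)
    (hp : G.IsWalkFromTo p a y) (hq : G.IsWalkFromTo q b y) (hxp : x ∉ p) (hxq : x ∉ q) :
    a = b := by
  have hyx : y ≠ x := fun h => hxp (h ▸ List.mem_of_getLast? hp.2.2)
  obtain ⟨r, hr⟩ := hG.1 y x
  obtain ⟨R, ⟨⟨hRw, hRn⟩, hR⟩, -⟩ := exists_isSimplePathFromTo_subset hr
  obtain ⟨R₀, w, rfl, hR₀, hwx⟩ := IsWalkFromTo.exists_eq_concat ⟨hRw, hR⟩ hyx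
  have hxR₀ : x ∉ R₀ := fun h => (List.nodup_append.1 hRn).2.2 x h x (by simp) rfl
  have hx : ∀ l, x ∉ l → x ∉ l ++ R₀.tail := fun l hl h =>
    (List.mem_append.1 h).elim hl fun h => hxR₀ (List.mem_of_mem_tail h)
  obtain ⟨l, hC, hla, hxl, hwC⟩ :=
    exists_isSimpleCycle_of_isWalkFromTo hxa (hp.append hR₀) hwx (hx p hxp)
  obtain ⟨m, hD, hmb, -, hwD⟩ :=
    exists_isSimpleCycle_of_isWalkFromTo hxb (hq.append hR₀) hwx (hx q hxq)
  -- both cycles pass through the arc `(w, x)`, so they coincide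
  have hxbC : (x, b) ∈ arcs (x :: l) :=
    ((hG.2 w x hwx).2 _ _ hD hwD hC hwC (x, b)).1 (mem_arcs_cons hmb)
  simpa [hla] using head?_eq_of_mem_arcs_cons hxl hxbC

theorem IsCactus.eq_of_isSimplePathFromTo (hG : G.IsCactus) (hp : G.IsSimplePathFromTo p x y)
    (hq : G.IsSimplePathFromTo q x y) : p = q := by
  induction p generalizing x q with
  | nil => exact hp.1.1.elim
  | cons c p ih =>
    obtain ⟨⟨hpw, hpn⟩, hpx, hpy⟩ := hp
    obtain rfl : c = x := by simpa using hpx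
    obtain ⟨q, rfl⟩ := List.head?_eq_some_iff.1 hq.2.1
    obtain ⟨⟨hqw, hqn⟩, -, hqy⟩ := hq
    rcases p with _ | ⟨a, p⟩ <;> rcases q with _ | ⟨b, q⟩
    · rfl
    · obtain rfl : c = y := by simpa using hpy
      rw [List.getLast?_cons_cons] at hqy
      exact absurd (List.mem_of_getLast? hqy) (List.nodup_cons.1 hqn).1
    · obtain rfl : c = y := by simpa using hqy
      rw [List.getLast?_cons_cons] at hpy
      exact absurd (List.mem_of_getLast? hpy) (List.nodup_cons.1 hpn).1
    · rw [List.getLast?_cons_cons] at hpy hqy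
      obtain rfl := hG.eq_of_adj_of_isWalkFromTo hpw.1 hqw.1 ⟨hpw.2, rfl, hpy⟩ ⟨hqw.2, rfl, hqy⟩
        (List.nodup_cons.1 hpn).1 (List.nodup_cons.1 hqn).1
      rw [ih ⟨⟨hpw.2, hpn.of_cons⟩, rfl, hpy⟩ ⟨⟨hqw.2, hqn.of_cons⟩, rfl, hqy⟩]

end DirGraph

namespace DirGraph.Subgraph

variable {V : Type} {G : DirGraph V} {H K : Subgraph G} {p c : List V} {x y : V}

lemma isWalk_inter_iff :
    (H.inter K).toDirGraph.IsWalk p ↔ H.toDirGraph.IsWalk p ∧ K.toDirGraph.IsWalk p := by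
  simp only [isWalk_iff_forall_mem_arcs, toDirGraph, inter]
  grind

lemma IsCactus.isSimpleCycle_of_mem_arcs (hG : G.CactusArcCond) (hH : H.IsCactus)
    (hxy : H.Adj x y) (hc : G.IsSimpleCycle c) (hm : (x, y) ∈ arcs c) :
    H.toDirGraph.IsSimpleCycle c := by
  obtain ⟨p, hp, hpm⟩ := (hH.2.2 x y hxy).1
  have hcp := (hG x y (H.adj_sub hxy)).2 c p hc hm (hp.mono H.adj_sub) hpm
  refine ⟨isWalk_iff_forall_mem_arcs.2 ⟨(isWalk_iff_forall_mem_arcs.1 hc.1).1, ?_⟩, hc.2⟩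
  exact fun a b hab => (isWalk_iff_forall_mem_arcs.1 hp.1).2 a b ((hcp _).1 hab)

lemma IsCactus.inter (hG : G.IsCactus) (hH : H.IsCactus) (hK : K.IsCactus)
    (hne : (H.inter K).verts.Nonempty) : (H.inter K).IsCactus := by
  refine ⟨hne, fun x hx y hy => ?_, fun u w huw => ⟨?_, fun p q hp hpm hq hqm => ?_⟩⟩
  · obtain ⟨rH, hrH⟩ := hH.2.1 x hx.1 y hy.1
    obtain ⟨rK, hrK⟩ := hK.2.1 x hx.2 y hy.2
    obtain ⟨pH, hpH, -⟩ := exists_isSimplePathFromTo_subset hrH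
    obtain ⟨pK, hpK, -⟩ := exists_isSimplePathFromTo_subset hrK
    obtain rfl := hG.eq_of_isSimplePathFromTo (hpH.mono H.adj_sub) (hpK.mono K.adj_sub)
    exact ⟨pH, isWalk_inter_iff.2 ⟨hpH.1.1, hpK.1.1⟩, hpH.2⟩
  · obtain ⟨c, hc, hm⟩ := (hG.2 u w (H.adj_sub huw.1)).1
    exact ⟨c, ⟨isWalk_inter_iff.2 ⟨(hH.isSimpleCycle_of_mem_arcs hG.2 huw.1 hc hm).1,
      (hK.isSimpleCycle_of_mem_arcs hG.2 huw.2 hc hm).1⟩, hc.2⟩, hm⟩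
  · exact (hG.2 u w (H.adj_sub huw.1)).2 p q (hp.mono (H.inter K).adj_sub) hpm
      (hq.mono (H.inter K).adj_sub) hqm

end DirGraph.Subgraph

/-- The intersection of two sub-cactus digraphs of a cactus digraph is a
sub-cactus digraph, a single vertex, or empty. -/
theorem inter_subcactus {V : Type} (G : DirGraph V) (hG : G.IsCactus)
    (H K : DirGraph.Subgraph G) (hH : H.IsCactus) (hK : K.IsCactus) :
    (H.inter K).IsCactus ∨
    (∃ v, (H.inter K).verts = {v} ∧ ∀ x y, ¬ (H.inter K).Adj x y) ∨
    (H.inter K).verts = ∅ := by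
  rcases (H.inter K).verts.eq_empty_or_nonempty with h | h
  · exact Or.inr (Or.inr h)
  · exact Or.inl (hH.inter hG hK h)
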